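/- Let A be an m×n real matrix, b ∈ ℝ^m, p ≥ 1, γ > 0, and let (μ_k)_{k≥0} be a nondecreasing sequence of positive reals with ∑_k 1/√μ_k < ∞. Let (u^k), (v^k), (λ^k) be sequences in ℝ^n satisfying for all k: u^{k+1} minimizes w ↦ γ‖∇w‖₀ + (μ_k/2)‖w − (v^k − λ^k/μ_k)‖₂²; v^{k+1} minimizes w ↦ ‖Aw − b‖_p^p + (μ_k/2)‖w − (u^{k+1} + λ^k/μ_k)‖₂²; and λ^{k+1} = λ^k + μ_k(u^{k+1} − v^{k+1}). Then the ADMM iteration converges: there exist u*, v* ∈ ℝ^n with u* = v* such that u^k → u*, v^k → v*, and λ^k/μ_k → 0 as k → ∞. -/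

import Mathlib

/-!
The `v`-step is a proximal step of the convex function `g w = ‖A w - b‖_p^p`, so its optimality
condition makes `λ^{k+1}` a subgradient of `g` at `v^{k+1}`. The `u`-step, compared with the
candidate `v^k - λ^k/μ_k`, costs at most `γ n`, and since
`u^{k+1} - v^k + λ^k/μ_k = λ^{k+1}/μ_k + (v^{k+1} - v^k)`, the two steps together give
`μ_k (‖λ^{k+1}/μ_k‖² + ‖v^{k+1} - v^k‖²) ≤ 2 γ n + 2 (g v^k - g v^{k+1})`.
After multiplication by the nonincreasing summable weights `1/√μ_k`, the right-hand sides have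
bounded partial sums (Abel summation and `g ≥ 0`), and AM-GM against `1/√μ_k` makes
`‖λ^{k+1}‖/μ_k` and `‖v^{k+1} - v^k‖` summable. So `v^k` is Cauchy, `λ^k/μ_k → 0`, and
`u^{k+1} - v^{k+1} = (λ^{k+1} - λ^k)/μ_k → 0`.
-/

open Filter Topology
open scoped BigOperators

noncomputable section

/-- The jump set of a signal `x ∈ ℝⁿ`: the indices `i` with `x i ≠ x (i+1)`. -/
def jumpSet {n : ℕ} (x : Fin n → ℝ) : Set (Fin n) :=
  {i | ∃ h : (i : ℕ) + 1 < n, x i ≠ x ⟨(i : ℕ) + 1, h⟩}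

/-- `‖∇x‖₀`: the number of jumps of `x`. -/
def nJumps {n : ℕ} (x : Fin n → ℝ) : ℕ := (jumpSet x).ncard

open Set

theorem nJumps_le {n : ℕ} (x : Fin n → ℝ) : nJumps x ≤ n := by
  simpa [nJumps] using Set.ncard_le_card (jumpSet x)

theorem ConvexOn.sum {𝕜 E β ι : Type*} [Semiring 𝕜] [PartialOrder 𝕜] [AddCommMonoid E]
    [AddCommMonoid β] [PartialOrder β] [IsOrderedAddMonoid β] [SMul 𝕜 E] [Module 𝕜 β]
    {s : Set E} (hs : Convex 𝕜 s) {t : Finset ι} {f : ι → E → β}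
    (hf : ∀ i ∈ t, ConvexOn 𝕜 s (f i)) : ConvexOn 𝕜 s fun x => ∑ i ∈ t, f i x := by
  classical
  induction t using Finset.induction_on with
  | empty => simpa using convexOn_const 0 hs
  | insert j t hj ih =>
    simp only [Finset.sum_insert hj]
    exact (hf j (t.mem_insert_self j)).add (ih fun i hi => hf i (Finset.mem_insert_of_mem hi))

theorem convexOn_abs_rpow {p : ℝ} (hp : 1 ≤ p) : ConvexOn ℝ univ fun x : ℝ => |x| ^ p := by
  refine ⟨convex_univ, fun x _ y _ a b ha hb hab => ?_⟩
  calc |a • x + b • y| ^ p ≤ (a • |x| + b • |y|) ^ p := by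
        gcongr
        simpa using (convexOn_norm convex_univ).2 (mem_univ x) (mem_univ y) ha hb hab
    _ ≤ a • |x| ^ p + b • |y| ^ p :=
        (convexOn_rpow hp).2 (abs_nonneg x) (abs_nonneg y) ha hb hab

theorem convexOn_sum_abs_mulVec_sub_rpow {m n : Type*} [Fintype m] [Fintype n]
    (A : Matrix m n ℝ) (b : m → ℝ) {p : ℝ} (hp : 1 ≤ p) :
    ConvexOn ℝ univ fun w => ∑ i, |A.mulVec w i - b i| ^ p := by
  refine ConvexOn.sum convex_univ fun i _ => ?_
  let L : (n → ℝ) →ᵃ[ℝ] ℝ :=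
    ((LinearMap.proj i).comp A.mulVecLin).toAffineMap - AffineMap.const ℝ _ (b i)
  exact (convexOn_abs_rpow hp).comp_affineMap L

theorem nonneg_of_forall_nonneg_add_mul {a b : ℝ} (h : ∀ t : ℝ, 0 < t → t ≤ 1 → 0 ≤ a + t * b) :
    0 ≤ a := by
  have hlim : Tendsto (fun t : ℝ => a + t * b) (𝓝[>] 0) (𝓝 a) := by
    have : Continuous fun t : ℝ => a + t * b := by fun_prop
    simpa using this.continuousWithinAt.tendsto (x := 0) (s := Ioi 0)
  refine ge_of_tendsto hlim ?_
  filter_upwards [Ioc_mem_nhdsGT one_pos] with t ht using h t ht.1 ht.2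

theorem ConvexOn.subgradient_of_prox {ι : Type*} [Fintype ι] {g : (ι → ℝ) → ℝ}
    (hg : ConvexOn ℝ univ g) {μ : ℝ} {x z : ι → ℝ}
    (hx : ∀ w, g x + μ / 2 * ∑ i, (x i - z i) ^ 2 ≤ g w + μ / 2 * ∑ i, (w i - z i) ^ 2)
    (y : ι → ℝ) : μ * ∑ i, (z i - x i) * (y i - x i) ≤ g y - g x := by
  set S := ∑ i, (z i - x i) * (y i - x i)
  set D := ∑ i, (y i - x i) ^ 2
  suffices 0 ≤ g y - g x - μ * S by linarith
  refine nonneg_of_forall_nonneg_add_mul (b := μ / 2 * D) fun t ht0 ht1 => ?_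
  have hconv : g (x + t • (y - x)) ≤ g x + t * (g y - g x) := by
    calc g (x + t • (y - x)) = g ((1 - t) • x + t • y) := by congr 1; module
      _ ≤ (1 - t) • g x + t • g y :=
          hg.2 (mem_univ x) (mem_univ y) (sub_nonneg.2 ht1) ht0.le (sub_add_cancel 1 t)
      _ = g x + t * (g y - g x) := by simp only [smul_eq_mul]; ring
  have hquad : ∑ i, ((x + t • (y - x)) i - z i) ^ 2
      = ∑ i, (x i - z i) ^ 2 - 2 * t * S + t ^ 2 * D := by
    simp only [S, D, Finset.mul_sum, ← Finset.sum_sub_distrib, ← Finset.sum_add_distrib]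
    refine Finset.sum_congr rfl fun i _ => ?_
    simp only [Pi.add_apply, Pi.smul_apply, Pi.sub_apply, smul_eq_mul]
    ring
  have hmin := hx (x + t • (y - x))
  rw [hquad] at hmin
  have : 0 ≤ t * (g y - g x - μ * S + t * (μ / 2 * D)) := by nlinarith
  exact (mul_nonneg_iff_of_pos_left ht0).1 this

theorem admm_step_energy {ι : Type*} [Fintype ι] {f g : (ι → ℝ) → ℝ} (hg : ConvexOn ℝ univ g)
    {C μ : ℝ} (hμ : 0 < μ) (hf0 : ∀ w, 0 ≤ f w) (hfC : ∀ w, f w ≤ C) {u v v' lam lam' : ι → ℝ}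
    (hu : ∀ w, f u + μ / 2 * ∑ i, (u i - (v i - lam i / μ)) ^ 2 ≤
      f w + μ / 2 * ∑ i, (w i - (v i - lam i / μ)) ^ 2)
    (hv : ∀ w, g v' + μ / 2 * ∑ i, (v' i - (u i + lam i / μ)) ^ 2 ≤
      g w + μ / 2 * ∑ i, (w i - (u i + lam i / μ)) ^ 2)
    (hlam : lam' = lam + μ • (u - v')) :
    μ * (∑ i, (lam' i / μ) ^ 2 + ∑ i, (v' i - v i) ^ 2) ≤ 2 * (C + g v - g v') := by
  have hlam_i : ∀ i, lam' i / μ = lam i / μ + (u i - v' i) := fun i => by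
    rw [hlam]; simp only [Pi.add_apply, Pi.smul_apply, Pi.sub_apply, smul_eq_mul]
    field_simp
  have hu_le : μ / 2 * ∑ i, (lam' i / μ + (v' i - v i)) ^ 2 ≤ C := by
    have h := hu fun i => v i - lam i / μ
    simp only [sub_self, zero_pow two_ne_zero, Finset.sum_const_zero, mul_zero, add_zero] at h
    have hsum : ∑ i, (u i - (v i - lam i / μ)) ^ 2 = ∑ i, (lam' i / μ + (v' i - v i)) ^ 2 :=
      Finset.sum_congr rfl fun i _ => by rw [hlam_i]; ring
    rw [hsum] at h
    linarith [hf0 u, hfC fun i => v i - lam i / μ]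
  have hsub : μ * ∑ i, lam' i / μ * (v i - v' i) ≤ g v - g v' := by
    have hz : ∀ i, u i + lam i / μ - v' i = lam' i / μ := fun i => by rw [hlam_i]; ring
    simpa only [hz] using hg.subgradient_of_prox hv v
  have hexpand : ∑ i, (lam' i / μ + (v' i - v i)) ^ 2 = ∑ i, (lam' i / μ) ^ 2 +
      ∑ i, (v' i - v i) ^ 2 - 2 * ∑ i, lam' i / μ * (v i - v' i) := by
    simp only [Finset.mul_sum, ← Finset.sum_add_distrib, ← Finset.sum_sub_distrib]
    exact Finset.sum_congr rfl fun i _ => by ring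
  rw [hexpand] at hu_le
  linarith

theorem sum_range_sub_mul_le {a c : ℕ → ℝ} (ha : ∀ k, 0 ≤ a k) (hc : Antitone c) (K : ℕ) :
    ∑ k ∈ Finset.range K, (a k - a (k + 1)) * c k ≤ a 0 * c 0 - a K * c K := by
  induction K with
  | zero => simp
  | succ K ih =>
    rw [Finset.sum_range_succ]
    nlinarith [ha (K + 1), hc K.le_succ]

theorem summable_of_le_add_sub_mul {a b c f : ℕ → ℝ} (hf : ∀ k, 0 ≤ f k) (hb : Summable b)
    (hb0 : ∀ k, 0 ≤ b k) (ha : ∀ k, 0 ≤ a k) (hc : Antitone c) (hc0 : ∀ k, 0 ≤ c k)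
    (h : ∀ k, f k ≤ b k + (a k - a (k + 1)) * c k) : Summable f := by
  refine summable_of_sum_range_le hf (c := ∑' k, b k + a 0 * c 0) fun K => ?_
  calc ∑ k ∈ Finset.range K, f k
      ≤ ∑ k ∈ Finset.range K, b k + ∑ k ∈ Finset.range K, (a k - a (k + 1)) * c k := by
        rw [← Finset.sum_add_distrib]; exact Finset.sum_le_sum fun k _ => h k
    _ ≤ ∑' k, b k + (a 0 * c 0 - a K * c K) :=
        add_le_add (hb.sum_le_tsum _ fun k _ => hb0 k) (sum_range_sub_mul_le ha hc K)
    _ ≤ ∑' k, b k + a 0 * c 0 := by linarith [mul_nonneg (ha K) (hc0 K)]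

theorem summable_of_sq_le_mul {x f c : ℕ → ℝ} (hx : ∀ k, 0 ≤ x k) (hf : Summable f)
    (hf0 : ∀ k, 0 ≤ f k) (hc : Summable c) (hc0 : ∀ k, 0 ≤ c k) (h : ∀ k, x k ^ 2 ≤ f k * c k) :
    Summable x := by
  refine ((hf.add hc).div_const 2).of_nonneg_of_le hx fun k => ?_
  nlinarith [sq_nonneg (f k - c k), h k, hx k, hf0 k, hc0 k]

theorem summable_sqrt_of_mul_le_add_sub {μ a x : ℕ → ℝ} {C : ℝ} (hC : 0 ≤ C)
    (hμpos : ∀ k, 0 < μ k) (hμmono : Monotone μ) (hμsum : Summable fun k => 1 / √(μ k))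
    (ha : ∀ k, 0 ≤ a k) (hx : ∀ k, 0 ≤ x k) (h : ∀ k, μ k * x k ≤ C + a k - a (k + 1)) :
    Summable fun k => √(x k) := by
  set c : ℕ → ℝ := fun k => 1 / √(μ k)
  have hc0 : ∀ k, 0 ≤ c k := fun k => by positivity
  have hc : Antitone c := fun j k hjk =>
    one_div_le_one_div_of_le (Real.sqrt_pos.2 (hμpos j)) (Real.sqrt_le_sqrt (hμmono hjk))
  have hc_sq : ∀ k, c k ^ 2 * μ k = 1 := fun k => by
    rw [div_pow, Real.sq_sqrt (hμpos k).le, one_pow, one_div_mul_cancel (hμpos k).ne']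
  have hF0 : ∀ k, 0 ≤ (C + a k - a (k + 1)) * c k :=
    fun k => mul_nonneg ((mul_nonneg (hμpos k).le (hx k)).trans (h k)) (hc0 k)
  have hF : Summable fun k => (C + a k - a (k + 1)) * c k :=
    summable_of_le_add_sub_mul hF0 (hμsum.mul_left C) (fun k => mul_nonneg hC (hc0 k)) ha hc hc0
      fun k => le_of_eq (by ring)
  refine summable_of_sq_le_mul (fun k => Real.sqrt_nonneg _) hF hF0 hμsum hc0 fun k => ?_
  rw [Real.sq_sqrt (hx k)]
  calc x k = c k ^ 2 * (μ k * x k) := by rw [← mul_assoc, hc_sq, one_mul]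
    _ ≤ c k ^ 2 * (C + a k - a (k + 1)) := by gcongr; exact h k
    _ = (C + a k - a (k + 1)) * c k * c k := by ring

theorem norm_le_sqrt_sum_sq {ι : Type*} [Fintype ι] (x : ι → ℝ) : ‖x‖ ≤ √(∑ i, x i ^ 2) :=
  (pi_norm_le_iff_of_nonneg (Real.sqrt_nonneg _)).2 fun i =>
    Real.abs_le_sqrt (Finset.single_le_sum (f := fun j => x j ^ 2) (fun _ _ => sq_nonneg _)
      (Finset.mem_univ i))

theorem admm_tendsto_of_summable {E : Type*} [NormedAddCommGroup E] [NormedSpace ℝ E]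
    [CompleteSpace E] {μ : ℕ → ℝ} (hμpos : ∀ k, 0 < μ k) (hμmono : Monotone μ)
    {u v lam : ℕ → E} (hlam : ∀ k, lam (k + 1) = lam k + μ k • (u (k + 1) - v (k + 1)))
    {s : ℕ → ℝ} (hs : Summable s) (hlam_le : ∀ k, ‖(μ k)⁻¹ • lam (k + 1)‖ ≤ s k)
    (hv_le : ∀ k, ‖v (k + 1) - v k‖ ≤ s k) :
    ∃ x, Tendsto u atTop (𝓝 x) ∧ Tendsto v atTop (𝓝 x) ∧
      Tendsto (fun k => (μ k)⁻¹ • lam k) atTop (𝓝 0) := by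
  have hs0 : Tendsto s atTop (𝓝 0) := hs.tendsto_atTop_zero
  obtain ⟨x, hvx⟩ : ∃ x, Tendsto v atTop (𝓝 x) := by
    refine cauchySeq_tendsto_of_complete (cauchySeq_of_summable_dist ?_)
    exact hs.of_nonneg_of_le (fun k => dist_nonneg) fun k => by
      rw [dist_comm, dist_eq_norm]; exact hv_le k
  have hnext : Tendsto (fun k => (μ k)⁻¹ • lam (k + 1)) atTop (𝓝 0) :=
    squeeze_zero_norm hlam_le hs0
  have hcur : Tendsto (fun k => (μ k)⁻¹ • lam k) atTop (𝓝 0) := by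
    rw [← tendsto_add_atTop_iff_nat 1]
    refine squeeze_zero_norm (fun k => le_trans ?_ (hlam_le k)) hs0
    rw [norm_smul, norm_smul, norm_inv, norm_inv, Real.norm_of_nonneg (hμpos _).le,
      Real.norm_of_nonneg (hμpos _).le]
    gcongr
    exacts [hμpos k, hμmono k.le_succ]
  have hu : ∀ k, u (k + 1) = v (k + 1) + ((μ k)⁻¹ • lam (k + 1) - (μ k)⁻¹ • lam k) := fun k => by
    rw [hlam, smul_add, inv_smul_smul₀ (hμpos k).ne']
    abel
  refine ⟨x, ?_, hvx, hcur⟩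
  rw [← tendsto_add_atTop_iff_nat 1]
  simpa [hu] using ((tendsto_add_atTop_iff_nat 1).2 hvx).add (hnext.sub hcur)

/-- The ADMM iteration converges: there are `u*, v*` with `u* = v*` such that
`u^k → u*`, `v^k → v*`, and `λ^k/μ_k → 0`. -/
theorem admm_converges (n m : ℕ)
    (A : Matrix (Fin m) (Fin n) ℝ) (b : Fin m → ℝ)
    (p γ : ℝ) (hp : 1 ≤ p) (hγ : 0 < γ)
    (μ : ℕ → ℝ) (hμpos : ∀ k, 0 < μ k) (hμmono : Monotone μ)
    (hμsum : Summable fun k => 1 / Real.sqrt (μ k))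
    (u v lam : ℕ → Fin n → ℝ)
    (hu : ∀ k : ℕ, ∀ w : Fin n → ℝ,
      γ * (nJumps (u (k + 1)) : ℝ) +
          μ k / 2 * ∑ i, (u (k + 1) i - (v k i - lam k i / μ k)) ^ 2 ≤
        γ * (nJumps w : ℝ) + μ k / 2 * ∑ i, (w i - (v k i - lam k i / μ k)) ^ 2)
    (hv : ∀ k : ℕ, ∀ w : Fin n → ℝ,
      (∑ i, |A.mulVec (v (k + 1)) i - b i| ^ p) +
          μ k / 2 * ∑ i, (v (k + 1) i - (u (k + 1) i + lam k i / μ k)) ^ 2 ≤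
        (∑ i, |A.mulVec w i - b i| ^ p) +
          μ k / 2 * ∑ i, (w i - (u (k + 1) i + lam k i / μ k)) ^ 2)
    (hlam : ∀ k : ℕ, lam (k + 1) = lam k + μ k • (u (k + 1) - v (k + 1))) :
    ∃ ustar vstar : Fin n → ℝ, ustar = vstar ∧
      Tendsto u atTop (𝓝 ustar) ∧ Tendsto v atTop (𝓝 vstar) ∧
      Tendsto (fun k : ℕ => (μ k)⁻¹ • lam k) atTop (𝓝 0) := by
  set g : (Fin n → ℝ) → ℝ := fun w => ∑ i, |A.mulVec w i - b i| ^ p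
  set e : ℕ → ℝ := fun k => ∑ i, (lam (k + 1) i / μ k) ^ 2 + ∑ i, (v (k + 1) i - v k i) ^ 2
  have hg0 : ∀ w, 0 ≤ g w := fun w => Finset.sum_nonneg fun i _ => by positivity
  have hstep : ∀ k, μ k * e k ≤ 2 * (γ * n) + 2 * g (v k) - 2 * g (v (k + 1)) := fun k =>
    (admm_step_energy (f := fun w => γ * nJumps w) (C := γ * n)
      (convexOn_sum_abs_mulVec_sub_rpow A b hp) (hμpos k) (fun w => by positivity)
      (fun w => mul_le_mul_of_nonneg_left (by exact_mod_cast nJumps_le w) hγ.le)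
      (hu k) (hv k) (hlam k)).trans_eq (by ring)
  have hsum := summable_sqrt_of_mul_le_add_sub (by positivity) hμpos hμmono hμsum
    (fun k => mul_nonneg zero_le_two (hg0 _)) (fun k => by positivity) hstep
  have hlam_le : ∀ k, ‖(μ k)⁻¹ • lam (k + 1)‖ ≤ √(e k) := fun k => by
    refine (norm_le_sqrt_sum_sq _).trans (Real.sqrt_le_sqrt ?_)
    simp only [e, Pi.smul_apply, smul_eq_mul, inv_mul_eq_div]
    exact le_add_of_nonneg_right (by positivity)
  have hv_le : ∀ k, ‖v (k + 1) - v k‖ ≤ √(e k) := fun k => by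
    refine (norm_le_sqrt_sum_sq _).trans (Real.sqrt_le_sqrt ?_)
    simp only [e, Pi.sub_apply]
    exact le_add_of_nonneg_left (by positivity)
  obtain ⟨x, hux, hvx, hlamx⟩ := admm_tendsto_of_summable hμpos hμmono hlam hsum hlam_le hv_le
  exact ⟨x, x, rfl, hux, hvx, hlamx⟩
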